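/- For all natural numbers a, b one has {tr((XZ)^a), tr((XZ)^b)} = 0 in 𝒪ₙ; that is, the traces of powers of the product XZ pairwise commute under the quasi-Poisson bracket induced on the representation space of the tadpole quiver. -/

import Mathlib

/-!
For a fixed matrix `P`, `g ↦ ∑ P_ji {W_ij, g}` is a derivation `D_P^W`, and by the Leibniz
rule `{tr W^(a+1), g} = (a+1) D_{W^a}^W g`. The bracket relations of `X` say
`X.map D_P^X = ½ (X²P - PX²)`; since `D_P^{XZ} = D_{ZP}^X + D_{PX}^Z`, the mixed relations turn this, after a noncommutative
polynomial identity, into the same relation `W.map D_P^W = ½ (W²P - PW²)` for `W = XZ`.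
For `P = W^a` the right-hand side vanishes, so `D_{W^a}^W` kills every entry of `W`, hence
every polynomial in them, in particular `tr W^b`.
-/

open Matrix Finset

/-- The polynomial ring `𝒪ₙ = ℂ[X_{ij}, Z_{ij}]` in the entries of two `n × n` matrices. -/
noncomputable abbrev Oring (n : ℕ) : Type :=
  MvPolynomial ((Fin n × Fin n) ⊕ (Fin n × Fin n)) ℂ

/-- The matrix `X` with polynomial entries `X_{ij}`. -/
noncomputable def Xm (n : ℕ) : Matrix (Fin n) (Fin n) (Oring n) :=
  Matrix.of fun i j => MvPolynomial.X (Sum.inl (i, j))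

/-- The matrix `Z` with polynomial entries `Z_{ij}`. -/
noncomputable def Zm (n : ℕ) : Matrix (Fin n) (Fin n) (Oring n) :=
  Matrix.of fun i j => MvPolynomial.X (Sum.inr (i, j))

/-- Kronecker delta in `𝒪ₙ`. -/
noncomputable def kd (n : ℕ) (i j : Fin n) : Oring n := if i = j then 1 else 0

namespace Derivation

variable {S A : Type*} [CommSemiring S] [CommSemiring A] [Algebra S A] (D : Derivation S A A)

theorem map_matrix_mul {l m n : Type*} [Fintype m] (M : Matrix l m A) (N : Matrix m n A) :
    (M * N).map D = M.map D * N + M * N.map D := by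
  ext i k
  simp only [map_apply, mul_apply, Matrix.add_apply, map_sum, leibniz, smul_eq_mul,
    ← sum_add_distrib]
  exact sum_congr rfl fun _ _ => by ring

variable {n : Type*} [Fintype n]

theorem map_trace (M : Matrix n n A) : D M.trace = (M.map D).trace := by
  simp [Matrix.trace, map_sum]

variable [DecidableEq n]

theorem map_matrix_pow_eq_zero {M : Matrix n n A} (hM : M.map D = 0) (k : ℕ) :
    (M ^ k).map D = 0 := by
  induction k with
  | zero => ext i j; by_cases h : i = j <;> simp [one_apply, h]
  | succ k ih => rw [pow_succ, map_matrix_mul, ih, hM, zero_mul, mul_zero, add_zero]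

theorem map_matrix_pow_succ (M : Matrix n n A) (k : ℕ) :
    (M ^ (k + 1)).map D = ∑ p ∈ antidiagonal k, M ^ p.1 * M.map D * M ^ p.2 := by
  induction k with
  | zero => simp
  | succ k ih =>
    rw [pow_succ, map_matrix_mul, ih, Nat.sum_antidiagonal_succ', sum_mul]
    simp only [pow_zero, mul_one, pow_succ, mul_assoc, add_comm]

theorem map_trace_pow_succ (M : Matrix n n A) (k : ℕ) :
    D (M ^ (k + 1)).trace = (k + 1) • (M ^ k * M.map D).trace := by
  rw [map_trace, map_matrix_pow_succ, trace_sum]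
  have hcycle : ∀ p ∈ antidiagonal k, (M ^ p.1 * M.map D * M ^ p.2).trace
      = (M ^ k * M.map D).trace := fun p hp => by
    rw [trace_mul_cycle, ← pow_add, add_comm, mem_antidiagonal.1 hp]
  rw [sum_congr rfl hcycle, sum_const, Nat.card_antidiagonal]

end Derivation

theorem Matrix.mul_mul_apply_eq_sum {R l m n o : Type*} [CommSemiring R] [Fintype m] [Fintype n]
    (A : Matrix l m R) (P : Matrix m n R) (B : Matrix n o R) (u : l) (v : o) :
    (A * P * B) u v = ∑ i, ∑ j, P j i * (A u j * B i v) := by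
  simp only [mul_apply, sum_mul]
  exact sum_congr rfl fun _ _ => sum_congr rfl fun _ _ => by ring

structure IsAntisymmBiderivation {R : Type*} [CommRing R] (br : R → R → R) : Prop where
  add_right : ∀ f g h, br f (g + h) = br f g + br f h
  mul_right : ∀ f g h, br f (g * h) = br f g * h + g * br f h
  antisymm : ∀ f g, br f g = -br g f

namespace IsAntisymmBiderivation

variable {R : Type*} [CommRing R] {br : R → R → R} (hb : IsAntisymmBiderivation br)

def deriv (f : R) : Derivation ℤ R R :=
  Derivation.mk' (AddMonoidHom.mk' (br f) (hb.add_right f)).toIntLinearMap fun g h => by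
    simp only [AddMonoidHom.coe_toIntLinearMap, AddMonoidHom.mk'_apply, hb.mul_right, smul_eq_mul]
    ring

@[simp]
theorem deriv_apply (f g : R) : hb.deriv f g = br f g := rfl

variable {ι : Type*} [Fintype ι]

/-- The derivation `g ↦ ∑ P_ji {W_ij, g}`, that is `{tr (P W), -}` with `P` held constant. -/
def matrixDeriv (W P : Matrix ι ι R) : Derivation ℤ R R :=
  ∑ i, ∑ j, P j i • hb.deriv (W i j)

theorem matrixDeriv_apply (W P : Matrix ι ι R) (g : R) :
    hb.matrixDeriv W P g = ∑ i, ∑ j, P j i * br (W i j) g := by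
  rw [matrixDeriv, ← Derivation.coeFnAddMonoidHom_apply, map_sum, Finset.sum_apply]
  simp [map_sum, Finset.sum_apply]

theorem matrixDeriv_apply_eq_neg_trace (W P : Matrix ι ι R) (g : R) :
    hb.matrixDeriv W P g = -(P * W.map (hb.deriv g)).trace := by
  simp only [matrixDeriv_apply, Matrix.trace, diag_apply, mul_apply, map_apply, deriv_apply,
    ← sum_neg_distrib, hb.antisymm g, mul_neg, neg_neg]
  exact sum_comm

variable [DecidableEq ι]

theorem bracket_trace_pow_succ (W : Matrix ι ι R) (a : ℕ) (g : R) :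
    br (W ^ (a + 1)).trace g = (a + 1) • hb.matrixDeriv W (W ^ a) g := by
  rw [hb.antisymm, ← hb.deriv_apply, Derivation.map_trace_pow_succ, matrixDeriv_apply_eq_neg_trace,
    smul_neg]

theorem matrixDeriv_mul (X Z P : Matrix ι ι R) :
    hb.matrixDeriv (X * Z) P = hb.matrixDeriv X (Z * P) + hb.matrixDeriv Z (P * X) := by
  ext g
  simp only [Derivation.add_apply, matrixDeriv_apply_eq_neg_trace, Derivation.map_matrix_mul,
    mul_add, trace_add, neg_add]
  rw [← mul_assoc, trace_mul_cycle, ← mul_assoc]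

/-- `hW` is the matrix form of `{W_ij, W_uv} = c ((W²)_uj δ_iv - δ_uj (W²)_iv)`, i.e. of the
double bracket `{{W, W}} = c (W² ⊗ 1 - 1 ⊗ W²)`. -/
theorem bracket_trace_pow_eq_zero {S : Type*} [CommSemiring S] [Algebra S R] {W : Matrix ι ι R}
    {c : S} (hW : ∀ P, W.map (hb.matrixDeriv W P) = c • (W ^ 2 * P - P * W ^ 2)) (a b : ℕ) :
    br (W ^ a).trace (W ^ b).trace = 0 := by
  cases a with
  | zero =>
    rw [pow_zero, trace_one, hb.antisymm, ← hb.deriv_apply, Derivation.map_natCast, neg_zero]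
  | succ a =>
    have hkill : W.map (hb.matrixDeriv W (W ^ a)) = 0 := by
      rw [hW, pow_mul_comm, sub_self, smul_zero]
    rw [hb.bracket_trace_pow_succ, Derivation.map_trace,
      Derivation.map_matrix_pow_eq_zero _ hkill, trace_zero, smul_zero]

section Tadpole

variable {S : Type*} [CommSemiring S] [Algebra S R] {X Z : Matrix ι ι R} {c : S}
  (hXX : ∀ i j u v, br (X i j) (X u v) =
    c • ((X ^ 2) u j * (1 : Matrix ι ι R) i v) - c • ((1 : Matrix ι ι R) u j * (X ^ 2) i v))
  (hZZ : ∀ i j u v, br (Z i j) (Z u v) =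
    c • ((1 : Matrix ι ι R) u j * (Z ^ 2) i v) - c • ((Z ^ 2) u j * (1 : Matrix ι ι R) i v))
  (hXZ : ∀ i j u v, br (X i j) (Z u v) =
    c • ((Z * X) u j * (1 : Matrix ι ι R) i v) + c • ((1 : Matrix ι ι R) u j * (X * Z) i v)
      + c • (Z u j * X i v) - c • (X u j * Z i v))

include hXX in
theorem X_map_matrixDeriv_X (P : Matrix ι ι R) :
    X.map (hb.matrixDeriv X P) = c • (X ^ 2 * P - P * X ^ 2) := by
  ext u v
  simp only [map_apply, matrixDeriv_apply, hXX, mul_sub, mul_smul_comm, sum_sub_distrib,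
    ← smul_sum, ← mul_mul_apply_eq_sum, Matrix.smul_apply, Matrix.sub_apply, smul_sub, mul_one,
    one_mul]

include hZZ in
theorem Z_map_matrixDeriv_Z (P : Matrix ι ι R) :
    Z.map (hb.matrixDeriv Z P) = c • (P * Z ^ 2 - Z ^ 2 * P) := by
  ext u v
  simp only [map_apply, matrixDeriv_apply, hZZ, mul_sub, mul_smul_comm, sum_sub_distrib,
    ← smul_sum, ← mul_mul_apply_eq_sum, Matrix.smul_apply, Matrix.sub_apply, smul_sub, mul_one,
    one_mul]

include hXZ in
theorem Z_map_matrixDeriv_X (P : Matrix ι ι R) :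
    Z.map (hb.matrixDeriv X P) = c • (Z * X * P + P * (X * Z) + Z * P * X - X * P * Z) := by
  ext u v
  simp only [map_apply, matrixDeriv_apply, hXZ, mul_add, mul_sub, mul_smul_comm, sum_add_distrib,
    sum_sub_distrib, ← smul_sum, ← mul_mul_apply_eq_sum, Matrix.smul_apply, Matrix.add_apply,
    Matrix.sub_apply, smul_add, smul_sub, mul_one, one_mul]

include hXZ in
theorem X_map_matrixDeriv_Z (P : Matrix ι ι R) :
    X.map (hb.matrixDeriv Z P) = c • (Z * P * X - X * Z * P - P * (Z * X) - X * P * Z) := by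
  have hZX : ∀ i j u v, br (Z i j) (X u v) =
      c • (Z u j * X i v) - c • ((X * Z) u j * (1 : Matrix ι ι R) i v)
        - c • ((1 : Matrix ι ι R) u j * (Z * X) i v) - c • (X u j * Z i v) := fun i j u v => by
    rw [hb.antisymm, hXZ]
    simp only [Algebra.smul_def]
    ring
  ext u v
  simp only [map_apply, matrixDeriv_apply, hZX, mul_sub, mul_smul_comm, sum_sub_distrib,
    ← smul_sum, ← mul_mul_apply_eq_sum, Matrix.smul_apply, Matrix.sub_apply, smul_sub, mul_one,
    one_mul]

include hXX hZZ hXZ in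
theorem mul_map_matrixDeriv_mul (P : Matrix ι ι R) :
    (X * Z).map (hb.matrixDeriv (X * Z) P) = c • ((X * Z) ^ 2 * P - P * (X * Z) ^ 2) := by
  have map_add_deriv (M : Matrix ι ι R) (D₁ D₂ : Derivation ℤ R R) :
      M.map ⇑(D₁ + D₂) = M.map D₁ + M.map D₂ := rfl
  rw [matrixDeriv_mul, Derivation.map_matrix_mul, map_add_deriv, map_add_deriv,
    X_map_matrixDeriv_X hb hXX, X_map_matrixDeriv_Z hb hXZ, Z_map_matrixDeriv_X hb hXZ,
    Z_map_matrixDeriv_Z hb hZZ, ← smul_add, ← smul_add, Matrix.smul_mul, Matrix.mul_smul,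
    ← smul_add]
  congr 1
  noncomm_ring

end Tadpole

end IsAntisymmBiderivation

theorem trace_pow_XZ_bracket_trace_pow_XZ_general (n : ℕ)
    (br : Oring n → Oring n → Oring n)
    (hadd : ∀ f g h : Oring n, br f (g + h) = br f g + br f h)
    (hleib : ∀ f g h : Oring n, br f (g * h) = br f g * h + g * br f h)
    (hanti : ∀ f g : Oring n, br f g = - br g f)
    (hXX : ∀ i j u v : Fin n,
      br (Xm n i j) (Xm n u v) =
        (2⁻¹ : ℂ) • ((Xm n ^ 2) u j * kd n i v) - (2⁻¹ : ℂ) • (kd n u j * (Xm n ^ 2) i v))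
    (hZZ : ∀ i j u v : Fin n,
      br (Zm n i j) (Zm n u v) =
        (2⁻¹ : ℂ) • (kd n u j * (Zm n ^ 2) i v) - (2⁻¹ : ℂ) • ((Zm n ^ 2) u j * kd n i v))
    (hXZ : ∀ i j u v : Fin n,
      br (Xm n i j) (Zm n u v) =
        (2⁻¹ : ℂ) • ((Zm n * Xm n) u j * kd n i v)
          + (2⁻¹ : ℂ) • (kd n u j * (Xm n * Zm n) i v)
          + (2⁻¹ : ℂ) • (Zm n u j * Xm n i v)
          - (2⁻¹ : ℂ) • (Xm n u j * Zm n i v))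
    (a b : ℕ) :
    br (Matrix.trace ((Xm n * Zm n) ^ a)) (Matrix.trace ((Xm n * Zm n) ^ b)) = 0 := by
  have hb : IsAntisymmBiderivation br := ⟨hadd, hleib, hanti⟩
  have hkd : kd n = (1 : Matrix (Fin n) (Fin n) (Oring n)) := by
    ext i j
    simp [kd, one_apply]
  rw [hkd] at hXX hZZ hXZ
  exact hb.bracket_trace_pow_eq_zero (hb.mul_map_matrixDeriv_mul hXX hZZ hXZ) a b

/-- the traces of powers of `X·Z` pairwise commute under the quasi-Poisson bracket. -/
theorem trace_pow_XZ_bracket_trace_pow_XZ (n : ℕ) (hn : 1 ≤ n)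
    (br : Oring n → Oring n → Oring n)
    (hadd : ∀ f g h : Oring n, br f (g + h) = br f g + br f h)
    (hsmul : ∀ (c : ℂ) (f g : Oring n), br f (c • g) = c • br f g)
    (hleib : ∀ f g h : Oring n, br f (g * h) = br f g * h + g * br f h)
    (hanti : ∀ f g : Oring n, br f g = - br g f)
    (hXX : ∀ i j u v : Fin n,
      br (Xm n i j) (Xm n u v) =
        (2⁻¹ : ℂ) • ((Xm n ^ 2) u j * kd n i v) - (2⁻¹ : ℂ) • (kd n u j * (Xm n ^ 2) i v))
    (hZZ : ∀ i j u v : Fin n,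
      br (Zm n i j) (Zm n u v) =
        (2⁻¹ : ℂ) • (kd n u j * (Zm n ^ 2) i v) - (2⁻¹ : ℂ) • ((Zm n ^ 2) u j * kd n i v))
    (hXZ : ∀ i j u v : Fin n,
      br (Xm n i j) (Zm n u v) =
        (2⁻¹ : ℂ) • ((Zm n * Xm n) u j * kd n i v)
          + (2⁻¹ : ℂ) • (kd n u j * (Xm n * Zm n) i v)
          + (2⁻¹ : ℂ) • (Zm n u j * Xm n i v)
          - (2⁻¹ : ℂ) • (Xm n u j * Zm n i v))
    (a b : ℕ) :
    br (Matrix.trace ((Xm n * Zm n) ^ a)) (Matrix.trace ((Xm n * Zm n) ^ b)) = 0 :=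
  trace_pow_XZ_bracket_trace_pow_XZ_general n br hadd hleib hanti hXX hZZ hXZ a b
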